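/- arXiv:1402.4708 — 4 statements merged into one kernel-verified Lean document; each statement's English description precedes it below -/
import Mathlib

section
/- The scattering function a(z) = (β_L(z)β_R(z)^{−1} + β_L(z)^{−1}β_R(z))/2 has strictly positive real part for all z ∈ ℂ \ ([−1,1] ∪ [λ₋, λ₊]); in particular a(z) has no zeros. -/
/-!
Off its cut, each Möbius map `(z - 1)/(z + 1)` and `(z - λ₊)/(z - λ₋)` avoids the closed negative
real axis, so its principal fourth root lies in the sector `|arg| < π/4`. The quotient
`w = β_L/β_R` then has `|arg w| < π/2`, i.e. `Re w > 0`; since `Re w⁻¹ = Re w / |w|²`, also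
`Re w⁻¹ > 0`, and `a = (w + w⁻¹)/2`.
-/

open Complex Set

lemma div_sub_mem_slitPlane {α β : ℝ} (hαβ : α < β) {z : ℂ}
    (hz : ¬(z.im = 0 ∧ α ≤ z.re ∧ z.re ≤ β)) : (z - β) / (z - α) ∈ slitPlane := by
  by_cases hy : z.im = 0
  · have hz_real : z = (z.re : ℂ) := ext (by simp) (by simp [hy])
    have hx : z.re < α ∨ β < z.re := by
      by_contra! h
      exact hz ⟨hy, h⟩
    rw [hz_real, ← ofReal_sub, ← ofReal_sub, ← ofReal_div, ofReal_mem_slitPlane]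
    rcases hx with hx | hx
    · exact div_pos_of_neg_of_neg (by linarith) (by linarith)
    · exact div_pos (by linarith) (by linarith)
  · have hα : z - α ≠ 0 := fun h => hy (by simpa using congr_arg im h)
    refine mem_slitPlane_iff.2 (Or.inr ?_)
    rw [div_im]
    simp only [sub_im, ofReal_im, sub_zero, sub_re, ofReal_re]
    rw [← sub_div, div_ne_zero_iff,
      show z.im * (z.re - α) - (z.re - β) * z.im = z.im * (β - α) by ring]
    exact ⟨mul_ne_zero hy (sub_ne_zero.2 hαβ.ne'), (normSq_pos.2 hα).ne'⟩

lemma re_cpow_div_cpow_pos {s : ℝ} (hs₀ : 0 ≤ s) (hs : s ≤ 1 / 4) {u v : ℂ}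
    (hu : u ∈ slitPlane) (hv : v ∈ slitPlane) : 0 < (u ^ (s : ℂ) / v ^ (s : ℂ)).re := by
  rw [cpow_def_of_ne_zero (slitPlane_ne_zero hu), cpow_def_of_ne_zero (slitPlane_ne_zero hv),
    ← exp_sub, exp_re]
  refine mul_pos (Real.exp_pos _) (Real.cos_pos_of_mem_Ioo ?_)
  have him : (log u * s - log v * s).im = s * (u.arg - v.arg) := by
    simp [log_im]; ring
  have hu_lt := arg_lt_pi_iff.2 (hu.imp le_of_lt id)
  have hv_lt := arg_lt_pi_iff.2 (hv.imp le_of_lt id)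
  have hu_gt := neg_pi_lt_arg u
  have hv_gt := neg_pi_lt_arg v
  rw [him]
  constructor <;> nlinarith [Real.pi_pos]

lemma re_add_inv_pos {w : ℂ} (hw : 0 < w.re) : 0 < (w + w⁻¹).re := by
  have : 0 < normSq w := normSq_pos.2 fun h => by simp [h] at hw
  rw [add_re, inv_re]
  positivity

theorem scattering_a_positive_real_part_general
    (lm lp : ℝ) (h2 : lm < lp) :
    let segL : Set ℂ := {w : ℂ | w.im = 0 ∧ -1 ≤ w.re ∧ w.re ≤ 1}
    let segR : Set ℂ := {w : ℂ | w.im = 0 ∧ lm ≤ w.re ∧ w.re ≤ lp}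
    let βL : ℂ → ℂ := fun z => ((z - 1) / (z + 1)) ^ ((1 : ℂ)/4)
    let βR : ℂ → ℂ := fun z => ((z - (lp : ℂ)) / (z - (lm : ℂ))) ^ ((1 : ℂ)/4)
    let a : ℂ → ℂ := fun z => (βL z / βR z + βR z / βL z) / 2
    ∀ z : ℂ, z ∉ segL ∪ segR → 0 < (a z).re ∧ a z ≠ 0 := by
  intro segL segR βL βR a z hz
  rw [mem_union, not_or] at hz
  have hL : (z - 1) / (z + 1) ∈ slitPlane := by
    simpa using div_sub_mem_slitPlane (α := -1) (β := 1) (by norm_num) hz.1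
  have hR := div_sub_mem_slitPlane h2 hz.2
  have hβ : 0 < (βL z / βR z).re := by
    have := re_cpow_div_cpow_pos (s := 1 / 4) (by norm_num) le_rfl hL hR
    push_cast at this
    exact this
  have ha : a z = (βL z / βR z + (βL z / βR z)⁻¹) / 2 := by simp only [a, inv_div]
  have hre : 0 < (a z).re := by
    rw [ha, div_ofNat_re]
    exact half_pos (re_add_inv_pos hβ)
  exact ⟨hre, fun h => by simp [h] at hre⟩

/-- The scattering function `a(z) = (β_L β_R⁻¹ + β_L⁻¹ β_R)/2` has strictly
positive real part (hence no zeros) on `ℂ \ ([−1,1] ∪ [λ₋,λ₊])`. -/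
theorem scattering_a_positive_real_part
    (lm lp : ℝ) (h1 : -1 < lm) (h2 : lm < lp) (h3 : lp < 1) :
    let segL : Set ℂ := {w : ℂ | w.im = 0 ∧ -1 ≤ w.re ∧ w.re ≤ 1}
    let segR : Set ℂ := {w : ℂ | w.im = 0 ∧ lm ≤ w.re ∧ w.re ≤ lp}
    let βL : ℂ → ℂ := fun z => ((z - 1) / (z + 1)) ^ ((1 : ℂ)/4)
    let βR : ℂ → ℂ := fun z => ((z - (lp : ℂ)) / (z - (lm : ℂ))) ^ ((1 : ℂ)/4)
    let a : ℂ → ℂ := fun z => (βL z / βR z + βR z / βL z) / 2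
    ∀ z : ℂ, z ∉ segL ∪ segR → 0 < (a z).re ∧ a z ≠ 0 :=
  scattering_a_positive_real_part_general lm lp h2
end

section
/- For real z outside I_L ∪ I_R, the reflection coefficient r(z) = −i(β_L(z)² − β_R(z)²)/(β_L(z)² + β_R(z)²) satisfies |r(z)| < 1, while for z in the symmetric difference I_L Δ I_R its boundary values satisfy |r_±(z)| = 1. -/
/-!
Write `r = reflection (√q_L) (√q_R)` with `reflection a b = -i (a - b) / (a + b)` and the
Möbius ratios `q_L = (z - 1)/(z + 1)`, `q_R = (z - λ₊)/(z - λ₋)`. Off `[-1, 1]` both ratios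
are positive reals, so `|a - b| < a + b` gives `|r| < 1`. On `I_L \ I_R` the ratio `q_L` is
negative, so from either half-plane `√q_L` tends to a nonzero purely imaginary number `c` (the
two sides of the cut of `log`), while `√q_R` tends to a real `β`; then `|c - β| = |c + β|`.
At the pole `x = λ₋` of `q_R` one divides by `√q_R` instead, and the boundary value is `i`.
-/

open Complex Set symmDiff Filter Topology
open scoped Real

noncomputable def reflection (a b : ℂ) : ℂ := -I * (a - b) / (a + b)

noncomputable def mobius (c₁ c₂ : ℝ) (z : ℂ) : ℂ := (z - c₁) / (z - c₂)

theorem norm_reflection_lt_one {a b : ℝ} (ha : 0 < a) (hb : 0 < b) :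
    ‖reflection a b‖ < 1 := by
  rw [reflection, norm_div, norm_mul, norm_neg, norm_I, one_mul, ← ofReal_sub, ← ofReal_add,
    norm_real, norm_real, Real.norm_eq_abs, Real.norm_eq_abs, abs_of_pos (add_pos ha hb),
    div_lt_one (add_pos ha hb), abs_sub_lt_iff]
  constructor <;> linarith

theorem norm_reflection_eq_one {c β : ℂ} (hc : c.re = 0) (hβ : β.im = 0) (h : c + β ≠ 0) :
    ‖reflection c β‖ = 1 := by
  have hnorm : ‖c - β‖ = ‖c + β‖ := by
    rw [norm_def, norm_def, normSq_apply, normSq_apply]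
    simp [hc, hβ]
  rw [reflection, norm_div, norm_mul, norm_neg, norm_I, one_mul, hnorm,
    div_self (norm_ne_zero_iff.2 h)]

theorem reflection_eq_mul_inv (a : ℂ) {b : ℂ} (hb : b ≠ 0) :
    reflection a b = reflection (a * b⁻¹) 1 := by
  rw [reflection, reflection, ← mul_div_mul_right _ _ (inv_ne_zero hb)]
  congr 1 <;> field_simp

theorem tendsto_reflection {α : Type*} {l : Filter α} {a b : α → ℂ} {c β : ℂ}
    (ha : Tendsto a l (𝓝 c)) (hb : Tendsto b l (𝓝 β)) (h : c + β ≠ 0) :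
    Tendsto (fun t => reflection (a t) (b t)) l (𝓝 (reflection c β)) :=
  (tendsto_const_nhds.mul (ha.sub hb)).div (ha.add hb) h

theorem ne_zero_of_mem_Ioi_or_Iio {S : Set ℝ} (hS : S = Ioi 0 ∨ S = Iio 0) {s : ℝ}
    (hs : s ∈ S) : s ≠ 0 := by
  rcases hS with rfl | rfl
  exacts [ne_of_gt hs, ne_of_lt hs]

section Mobius

variable {c₁ c₂ x : ℝ}

theorem mobius_ofReal (c₁ c₂ x : ℝ) : mobius c₁ c₂ x = (((x - c₁) / (x - c₂) : ℝ) : ℂ) := by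
  rw [mobius]; push_cast; rfl

theorem inv_mobius (c₁ c₂ : ℝ) (z : ℂ) : (mobius c₁ c₂ z)⁻¹ = mobius c₂ c₁ z := inv_div _ _

theorem tendsto_mobius (hx : x ≠ c₂) :
    Tendsto (mobius c₁ c₂) (𝓝 (x : ℂ)) (𝓝 (((x - c₁) / (x - c₂) : ℝ) : ℂ)) := by
  rw [← mobius_ofReal]
  have hden : (x : ℂ) - c₂ ≠ 0 := sub_ne_zero.2 (ofReal_injective.ne hx)
  exact ((continuousAt_id.sub continuousAt_const).div
    (continuousAt_id.sub continuousAt_const) hden).tendsto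

theorem im_mobius (c₁ c₂ : ℝ) (z : ℂ) :
    (mobius c₁ c₂ z).im = z.im * (c₁ - c₂) / normSq (z - c₂) := by
  rw [mobius, div_im]
  simp only [sub_re, sub_im, ofReal_re, ofReal_im, sub_zero]
  ring

theorem im_mobius_mem {S : Set ℝ} (hS : S = Ioi 0 ∨ S = Iio 0) (h : c₂ < c₁) {z : ℂ}
    (hz : z.im ∈ S) : (mobius c₁ c₂ z).im ∈ S := by
  have hz0 : z - c₂ ≠ 0 := fun h0 =>
    ne_zero_of_mem_Ioi_or_Iio hS hz (by simpa using congrArg im h0)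
  have hpos : 0 < (c₁ - c₂) / normSq (z - c₂) := div_pos (by linarith) (normSq_pos.2 hz0)
  rw [im_mobius, mul_div_assoc]
  rcases hS with rfl | rfl
  exacts [mul_pos hz hpos, mul_neg_of_neg_of_pos hz hpos]

theorem div_sub_sub_pos (h : c₂ ≤ c₁) (hx : x ∉ Icc c₂ c₁) : 0 < (x - c₁) / (x - c₂) := by
  rw [mem_Icc, not_and_or, not_le, not_le] at hx
  rcases hx with hx | hx
  exacts [div_pos_of_neg_of_neg (by linarith) (by linarith),
    div_pos (by linarith) (by linarith)]

theorem div_sub_sub_nonneg (h : c₂ ≤ c₁) (hx : x ∉ Ioo c₂ c₁) : 0 ≤ (x - c₁) / (x - c₂) := by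
  rw [mem_Ioo, not_and_or, not_lt, not_lt] at hx
  rcases hx with hx | hx
  exacts [div_nonneg_of_nonpos (by linarith) (by linarith),
    div_nonneg (by linarith) (by linarith)]

theorem div_sub_sub_neg (hx : x ∈ Ioo c₂ c₁) : (x - c₁) / (x - c₂) < 0 :=
  div_neg_of_neg_of_pos (by linarith [hx.2]) (by linarith [hx.1])

end Mobius

theorem sq_cpow_one_div_four (z : ℂ) : (z ^ (1 / 4 : ℂ)) ^ 2 = z ^ (1 / 2 : ℂ) := by
  rw [← cpow_nat_mul]; norm_num

theorem ofReal_cpow_one_div_two {v : ℝ} (hv : 0 ≤ v) :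
    (v : ℂ) ^ (1 / 2 : ℂ) = (√v : ℂ) := by
  rw [Real.sqrt_eq_rpow, ofReal_cpow hv]; norm_num

theorem tendsto_cpow_one_div_two_of_nonneg {α : Type*} {l : Filter α} {f : α → ℂ} {v : ℝ}
    (hv : 0 ≤ v) (hf : Tendsto f l (𝓝 v)) :
    Tendsto (fun t => f t ^ (1 / 2 : ℂ)) l (𝓝 (√v : ℂ)) := by
  rw [← ofReal_cpow_one_div_two hv]
  exact (continuousAt_cpow_const_of_re_pos (Or.inl (by simpa using hv)) (by norm_num)).tendsto.comp
    hf

theorem exists_tendsto_cpow_one_div_two_of_neg {α : Type*} {l : Filter α} {f : α → ℂ} {y : ℝ}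
    {S : Set ℝ} (hS : S = Ioi 0 ∨ S = Iio 0) (hy : y < 0) (hf : Tendsto f l (𝓝 y))
    (hside : ∀ᶠ t in l, (f t).im ∈ S) :
    ∃ c : ℂ, c.re = 0 ∧ c ≠ 0 ∧ Tendsto (fun t => f t ^ (1 / 2 : ℂ)) l (𝓝 c) := by
  obtain ⟨θ, hθ, hlog⟩ : ∃ θ : ℝ, (θ = π ∨ θ = -π) ∧
      Tendsto (fun t => log (f t)) l (𝓝 (Real.log ‖(y : ℂ)‖ + θ * I)) := by
    rcases hS with rfl | rfl
    · exact ⟨π, .inl rfl, (tendsto_log_nhdsWithin_im_nonneg_of_re_neg_of_im_zero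
        (by simpa using hy) (ofReal_im y)).comp
        (tendsto_nhdsWithin_iff.2 ⟨hf, hside.mono fun t (ht : 0 < (f t).im) =>
          show 0 ≤ (f t).im from ht.le⟩)⟩
    · refine ⟨-π, .inr rfl, ?_⟩
      rw [show (Real.log ‖(y : ℂ)‖ : ℂ) + ((-π : ℝ) : ℂ) * I = Real.log ‖(y : ℂ)‖ - π * I by
        push_cast; ring]
      exact (tendsto_log_nhdsWithin_im_neg_of_re_neg_of_im_zero (by simpa using hy)
        (ofReal_im y)).comp (tendsto_nhdsWithin_iff.2 ⟨hf, hside⟩)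
  refine ⟨exp ((Real.log ‖(y : ℂ)‖ + θ * I) * (1 / 2)), ?_, exp_ne_zero _, ?_⟩
  · rcases hθ with rfl | rfl <;> simp [exp_re, ← div_eq_mul_inv, neg_div]
  · refine ((continuous_exp.tendsto _).comp (hlog.mul_const _)).congr' ?_
    filter_upwards [hside] with t ht
    have hft : f t ≠ 0 := fun h0 => ne_zero_of_mem_Ioi_or_Iio hS ht (by simp [h0])
    exact (cpow_def_of_ne_zero hft _).symm

section BoundaryValues

variable {a₁ a₂ b₁ b₂ x : ℝ} {S : Set ℝ}

theorem tendsto_ofReal_add_mul_I_nhdsWithin (x : ℝ) (S : Set ℝ) :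
    Tendsto (fun t : ℝ => (x : ℂ) + t * I) (𝓝[S] 0) (𝓝[im ⁻¹' S] (x : ℂ)) := by
  refine tendsto_nhdsWithin_iff.2
    ⟨?_, eventually_nhdsWithin_of_forall fun t ht => by simpa using ht⟩
  have hcont : Continuous (fun t : ℝ => (x : ℂ) + t * I) := by fun_prop
  simpa using (hcont.tendsto 0).mono_left nhdsWithin_le_nhds

theorem eventually_im_mobius_mem (hS : S = Ioi 0 ∨ S = Iio 0) (h : b₂ < b₁) (z₀ : ℂ) :
    ∀ᶠ z in 𝓝[im ⁻¹' S] z₀, (mobius b₁ b₂ z).im ∈ S :=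
  eventually_nhdsWithin_of_forall fun _ hz => im_mobius_mem hS h hz

theorem exists_tendsto_cpow_mobius_of_mem_Ioo (hS : S = Ioi 0 ∨ S = Iio 0)
    (hx : x ∈ Ioo a₂ a₁) : ∃ c : ℂ, c.re = 0 ∧ c ≠ 0 ∧
      Tendsto (fun z => mobius a₁ a₂ z ^ (1 / 2 : ℂ)) (𝓝[im ⁻¹' S] (x : ℂ)) (𝓝 c) :=
  exists_tendsto_cpow_one_div_two_of_neg hS (div_sub_sub_neg hx)
    ((tendsto_mobius hx.1.ne').mono_left nhdsWithin_le_nhds)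
    (eventually_im_mobius_mem hS (hx.1.trans hx.2) _)

theorem tendsto_inv_cpow_mobius_at_pole (hS : S = Ioi 0 ∨ S = Iio 0) (h : b₂ < b₁) :
    Tendsto (fun z => (mobius b₁ b₂ z ^ (1 / 2 : ℂ))⁻¹) (𝓝[im ⁻¹' S] (b₂ : ℂ)) (𝓝 0) := by
  have hzero :
      Tendsto (fun z => mobius b₂ b₁ z ^ (1 / 2 : ℂ)) (𝓝[im ⁻¹' S] (b₂ : ℂ)) (𝓝 0) := by
    simpa using tendsto_cpow_one_div_two_of_nonneg (by simp)
      ((tendsto_mobius (c₁ := b₂) h.ne).mono_left (nhdsWithin_le_nhds (s := im ⁻¹' S)))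
  refine hzero.congr' ?_
  filter_upwards [eventually_im_mobius_mem hS h _] with z hz
  have him := ne_zero_of_mem_Ioi_or_Iio hS hz
  rw [← inv_cpow _ _ fun hπ => him (arg_eq_pi_iff.1 hπ).2, inv_mobius]

theorem tendsto_reflection_at_pole (hS : S = Ioi 0 ∨ S = Iio 0) (h : b₂ < b₁) {a : ℂ → ℂ}
    {c : ℂ} (ha : Tendsto a (𝓝[im ⁻¹' S] (b₂ : ℂ)) (𝓝 c)) :
    Tendsto (fun z => reflection (a z) (mobius b₁ b₂ z ^ (1 / 2 : ℂ)))
      (𝓝[im ⁻¹' S] (b₂ : ℂ)) (𝓝 I) := by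
  have hlim := tendsto_reflection (ha.mul (tendsto_inv_cpow_mobius_at_pole hS h))
    tendsto_const_nhds (by simp : c * 0 + (1 : ℂ) ≠ 0)
  rw [show reflection (c * 0) 1 = I by simp [reflection]] at hlim
  refine hlim.congr' ?_
  filter_upwards [eventually_im_mobius_mem hS h _] with z hz
  have hne : mobius b₁ b₂ z ≠ 0 := fun h0 => ne_zero_of_mem_Ioi_or_Iio hS hz (by simp [h0])
  have hroot : mobius b₁ b₂ z ^ (1 / 2 : ℂ) ≠ 0 :=
    (cpow_ne_zero_iff_of_exponent_ne_zero (by norm_num)).2 hne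
  exact (reflection_eq_mul_inv _ hroot).symm

theorem exists_tendsto_reflection_cpow_mobius (hS : S = Ioi 0 ∨ S = Iio 0)
    (hx : x ∈ Ioo a₂ a₁) (hb : b₂ < b₁) (hxb : x ∉ Ioo b₂ b₁) : ∃ w₀ : ℂ, ‖w₀‖ = 1 ∧
      Tendsto (fun z => reflection (mobius a₁ a₂ z ^ (1 / 2 : ℂ))
        (mobius b₁ b₂ z ^ (1 / 2 : ℂ))) (𝓝[im ⁻¹' S] (x : ℂ)) (𝓝 w₀) := by
  obtain ⟨c, hc_re, hc_ne, hc⟩ := exists_tendsto_cpow_mobius_of_mem_Ioo hS hx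
  rcases eq_or_ne x b₂ with rfl | hxb₂
  · exact ⟨I, norm_I, tendsto_reflection_at_pole hS hb hc⟩
  · have hβ := tendsto_cpow_one_div_two_of_nonneg (div_sub_sub_nonneg hb.le hxb)
      ((tendsto_mobius hxb₂).mono_left (nhdsWithin_le_nhds (s := im ⁻¹' S)))
    have hcβ : c + (√((x - b₁) / (x - b₂)) : ℂ) ≠ 0 := fun h0 =>
      hc_ne (Complex.ext hc_re (by simpa using congrArg im h0))
    exact ⟨_, norm_reflection_eq_one hc_re (ofReal_im _) hcβ, tendsto_reflection hc hβ hcβ⟩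

end BoundaryValues

theorem norm_reflection_cpow_mobius_lt_one {a₁ a₂ b₁ b₂ x : ℝ} (ha : a₂ ≤ a₁) (hb : b₂ ≤ b₁)
    (hxa : x ∉ Icc a₂ a₁) (hxb : x ∉ Icc b₂ b₁) :
    ‖reflection (mobius a₁ a₂ x ^ (1 / 2 : ℂ)) (mobius b₁ b₂ x ^ (1 / 2 : ℂ))‖ < 1 := by
  have hu := div_sub_sub_pos ha hxa
  have hv := div_sub_sub_pos hb hxb
  rw [mobius_ofReal, mobius_ofReal, ofReal_cpow_one_div_two hu.le,
    ofReal_cpow_one_div_two hv.le]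
  exact norm_reflection_lt_one (Real.sqrt_pos.2 hu) (Real.sqrt_pos.2 hv)

/-- The reflection coefficient `r = −i(β_L² − β_R²)/(β_L² + β_R²)` satisfies
`|r(z)| < 1` for real `z` outside `I_L ∪ I_R`, while for `z` in the symmetric
difference `I_L Δ I_R` its boundary values from above and below the real axis
have modulus one. -/
theorem reflection_coefficient_modulus
    (lm lp : ℝ) (h1 : -1 < lm) (h2 : lm < lp) (h3 : lp < 1) :
    let βL : ℂ → ℂ := fun z => ((z - 1) / (z + 1)) ^ ((1 : ℂ)/4)
    let βR : ℂ → ℂ := fun z => ((z - (lp : ℂ)) / (z - (lm : ℂ))) ^ ((1 : ℂ)/4)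
    let r : ℂ → ℂ := fun z =>
      -Complex.I * ((βL z)^2 - (βR z)^2) / ((βL z)^2 + (βR z)^2)
    (∀ x : ℝ, x ∉ Set.Icc (-1 : ℝ) 1 → ‖r (x : ℂ)‖ < 1) ∧
    (∀ x : ℝ, x ∈ (Set.Ioo (-1 : ℝ) 1) ∆ (Set.Ioo lm lp) →
      (∀ w : ℂ,
        Filter.Tendsto (fun t : ℝ => r ((x : ℂ) + t * Complex.I))
          (nhdsWithin 0 (Set.Ioi 0)) (nhds w) → ‖w‖ = 1) ∧
      (∀ w : ℂ,
        Filter.Tendsto (fun t : ℝ => r ((x : ℂ) + t * Complex.I))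
          (nhdsWithin 0 (Set.Iio 0)) (nhds w) → ‖w‖ = 1)) := by
  intro βL βR r
  have hr : ∀ z, r z =
      reflection (mobius 1 (-1) z ^ (1 / 2 : ℂ)) (mobius lp lm z ^ (1 / 2 : ℂ)) := by
    intro z
    simp only [r, βL, βR, sq_cpow_one_div_four, mobius, reflection]
    push_cast
    rw [sub_neg_eq_add]
  simp only [hr]
  refine ⟨fun x hx => norm_reflection_cpow_mobius_lt_one (by norm_num) h2.le hx
    fun hx' => hx (Icc_subset_Icc h1.le h3.le hx'), fun x hx => ?_⟩
  rw [symmDiff_of_ge (Ioo_subset_Ioo h1.le h3.le)] at hx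
  have side : ∀ S : Set ℝ, (S = Ioi 0 ∨ S = Iio 0) → ∀ w : ℂ,
      Tendsto (fun t : ℝ => reflection (mobius 1 (-1) (x + t * I) ^ (1 / 2 : ℂ))
        (mobius lp lm (x + t * I) ^ (1 / 2 : ℂ))) (𝓝[S] 0) (𝓝 w) → ‖w‖ = 1 := by
    intro S hS w hw
    obtain ⟨w₀, hw₀, hlim⟩ := exists_tendsto_reflection_cpow_mobius hS hx.1 h2 hx.2
    have : (𝓝[S] (0 : ℝ)).NeBot := by rcases hS with rfl | rfl <;> infer_instance
    rwa [tendsto_nhds_unique hw (hlim.comp (tendsto_ofReal_add_mul_I_nhdsWithin x S))]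
  exact ⟨side _ (.inl rfl), side _ (.inr rfl)⟩
end

section
/- In the central plateau zone: for −(−1+3λ₊)/2 < τ < −(−1+λ₊+2λ₋)/2, the three points ξ₀(τ) = −(−1+λ₊)/2 − τ and ξ_±(τ) = (−1+λ₊−τ)/4 ± (1/4)√((−1+λ₊+τ)² + 2(λ₊+1)²) satisfy the strict ordering −1 < ξ₋(τ) < ξ₀(τ) < ξ₊(τ) < λ₊. -/
/-- Central plateau ordering: for `τ₂ < τ < τ₃`, the points
`ξ₀(τ) = −(−1+λ₊)/2 − τ` and
`ξ_±(τ) = (−1+λ₊−τ)/4 ± (1/4)√((−1+λ₊+τ)² + 2(λ₊+1)²)` satisfy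
`−1 < ξ₋(τ) < ξ₀(τ) < ξ₊(τ) < λ₊`. -/
theorem central_plateau_ordering
    (lm lp : ℝ) (h1 : -1 < lm) (h2 : lm < lp) (h3 : lp < 1)
    (τ : ℝ)
    (hτ2 : -(-1 + 3*lp)/2 < τ) (hτ3 : τ < -(-1 + lp + 2*lm)/2) :
    let ξ0 : ℝ := -(-1 + lp)/2 - τ
    let ξp : ℝ := (-1 + lp - τ)/4 + Real.sqrt ((-1 + lp + τ)^2 + 2*(lp + 1)^2) / 4
    let ξm : ℝ := (-1 + lp - τ)/4 - Real.sqrt ((-1 + lp + τ)^2 + 2*(lp + 1)^2) / 4;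
    -1 < ξm ∧ ξm < ξ0 ∧ ξ0 < ξp ∧ ξp < lp := by
  intro ξ0 ξp ξm
  set s : ℝ := Real.sqrt ((-1 + lp + τ)^2 + 2*(lp + 1)^2) with hs
  have hs0 : 0 ≤ s := Real.sqrt_nonneg _
  have hs2 : s^2 = (-1 + lp + τ)^2 + 2*(lp + 1)^2 := by
    rw [hs, Real.sq_sqrt]; positivity
  -- key: s^2 > 9*(lp+τ-1)^2
  have hkey : s^2 > 9*(lp + τ - 1)^2 := by
    nlinarith [mul_pos (show (0:ℝ) < lp + 1 - 2*(lp+τ-1) by nlinarith)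
      (show (0:ℝ) < lp + 1 + 2*(lp+τ-1) by nlinarith)]
  have hgt1 : s > 3*(lp + τ - 1) := by nlinarith
  have hgt2 : s > 3*(1 - lp - τ) := by nlinarith
  have hlt1 : s < 3 + lp - τ := by
    nlinarith [mul_pos (show (0:ℝ) < 1 + lp by linarith) (show (0:ℝ) < 1 + lm by linarith)]
  have hlt2 : s < 3*lp + 1 + τ := by
    nlinarith [mul_pos (show (0:ℝ) < lp + 1 by linarith) (show (0:ℝ) < 3*lp - 1 + 2*τ by nlinarith)]
  refine ⟨?_, ?_, ?_, ?_⟩ <;> simp only [ξ0, ξp, ξm] <;> nlinarith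
end

section
/- In the far right field, the condition ξ₋(τ) < −1 for the stationary point ξ₋(τ) = (λ₊+λ₋−τ)/4 − (1/4)√((λ₊+λ₋+τ)² + 2(λ₊−λ₋)²) holds if and only if τ > −(λ₊+λ₋−2)/2 + 2(1+λ₋)(1+λ₊)/(2+λ₋+λ₊). -/
/-- Far right field condition: `ξ₋(τ) < −1` iff
`τ > −(λ₊+λ₋−2)/2 + 2(1+λ₋)(1+λ₊)/(2+λ₋+λ₊)`. -/
theorem far_right_field_condition
    (lm lp : ℝ) (h1 : -1 < lm) (h2 : lm < lp) (h3 : lp < 1) :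
    let ξm : ℝ → ℝ := fun τ =>
      (lp + lm - τ)/4 - Real.sqrt ((lp + lm + τ)^2 + 2*(lp - lm)^2) / 4
    let τ4 : ℝ := -(lp + lm - 2)/2 + 2*(1 + lm)*(1 + lp)/(2 + lm + lp)
    ∀ τ : ℝ, ξm τ < -1 ↔ τ4 < τ := by
  intro ξm τ4 τ
  have hs : (0:ℝ) < lp + lm + 2 := by linarith
  have hpos : (0:ℝ) < 2 * (lp + lm + 2) := by linarith
  have hd : (0:ℝ) < (lp - lm)^2 := pow_pos (by linarith) 2
  set A : ℝ := (lp + lm + τ)^2 + 2*(lp - lm)^2 with hA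
  have hA0 : 0 < A := by nlinarith [sq_nonneg (lp + lm + τ)]
  have hτ4 : τ4 = 2 - (lp - lm)^2 / (2 * (lp + lm + 2)) := by
    show -(lp + lm - 2)/2 + 2*(1 + lm)*(1 + lp)/(2 + lm + lp) = _
    have hne : (2:ℝ) + lm + lp ≠ 0 := by linarith
    field_simp
    ring
  have hsq : Real.sqrt A ^ 2 = A := Real.sq_sqrt hA0.le
  have hξ : ξm τ < -1 ↔ lp + lm - τ + 4 < Real.sqrt A := by
    show (lp + lm - τ)/4 - Real.sqrt A / 4 < -1 ↔ _
    constructor <;> intro h <;> linarith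
  rw [hξ, hτ4]
  constructor
  · intro h
    rcases le_or_gt (lp + lm - τ + 4) 0 with hc | hc
    · have : 0 ≤ (lp - lm)^2 / (2 * (lp + lm + 2)) := by positivity
      linarith
    · have hsq' : (lp + lm - τ + 4)^2 < A := by
        nlinarith [Real.sqrt_nonneg A]
      have key : (2 - τ) * (2 * (lp + lm + 2)) < (lp - lm)^2 := by nlinarith
      have := (lt_div_iff₀ hpos).mpr key
      linarith
  · intro h
    have h5 : (2 - τ) < (lp - lm)^2 / (2 * (lp + lm + 2)) := by linarith
    have key : (2 - τ) * (2 * (lp + lm + 2)) < (lp - lm)^2 := (lt_div_iff₀ hpos).mp h5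
    rcases le_or_gt (lp + lm - τ + 4) 0 with hc | hc
    · have := Real.sqrt_pos.mpr hA0
      linarith
    · have : (lp + lm - τ + 4)^2 < A := by nlinarith
      exact Real.lt_sqrt_of_sq_lt this
end
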